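/- Proof template, uniform pricing: let λ > 0 and μ ≥ 0, fix a strategy space S_i for each bidder (either all non-increasing bid vectors or all uniform bid vectors), and suppose that for every valuation profile (v_1,…,v_n) with v_i ∈ V_i, every bidder i, and every finitely supported probability distribution P_{−i} over profiles b_{−i} of bids from the strategy spaces satisfying no-overbidding, there exists a bid vector b'_i ∈ S_i satisfying no-overbidding w.r.t. v_i such that E_{b_{−i}∼P_{−i}}[u_i^{v_i}(b'_i, b_{−i})] ≥ λ·v_i(x_i^v) − μ·E_{b_{−i}∼P_{−i}}[Σ_{j=1}^{x_i^v} β_j(b_{−i})]. Then under uniform pricing, for every finite product prior π and every Bayes-Nash equilibrium B whose strategies place all mass on no-overbidding bid vectors, E_{v∼π}[SW(v, x^v)] ≤ ((μ+1)/λ) · E_{v∼π} E_{b∼B^v}[SW(v, x(b))]. -/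

import Mathlib

open Finset MeasureTheory

noncomputable section

/-- A bid vector for an auction of `k` units: entry `j` is the `(j+1)`-st marginal bid. -/
abbrev Bid (k : ℕ) := Fin k → ℝ

/-- Standard bid vectors: non-increasing and non-negative. -/
def StdBid {k : ℕ} (b : Bid k) : Prop :=
  (∀ j j' : Fin k, j ≤ j' → b j' ≤ b j) ∧ ∀ j, 0 ≤ b j

/-- Uniform bid vectors: a common value `c ≥ 0` on the first `q ≤ k` entries, `0` afterwards. -/
def UnifBid {k : ℕ} (b : Bid k) : Prop :=
  ∃ c : ℝ, 0 ≤ c ∧ ∃ q : ℕ, q ≤ k ∧ ∀ j : Fin k, b j = if (j : ℕ) < q then c else 0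

/-- A valuation on `{0,…,k}`: zero at `0`, non-negative and non-decreasing (up to `k`). -/
def IsValuation (k : ℕ) (v : ℕ → ℝ) : Prop :=
  v 0 = 0 ∧ (∀ x, 0 ≤ v x) ∧ ∀ x y : ℕ, x ≤ y → y ≤ k → v x ≤ v y

/-- Submodularity: non-increasing marginal values `v j - v (j-1)`. -/
def SubmodularVal (k : ℕ) (v : ℕ → ℝ) : Prop :=
  ∀ x y : ℕ, 1 ≤ x → x < y → y ≤ k → v y - v (y - 1) ≤ v x - v (x - 1)

/-- Subadditivity. -/
def SubadditiveVal (k : ℕ) (v : ℕ → ℝ) : Prop :=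
  ∀ x y : ℕ, x + y ≤ k → v (x + y) ≤ v x + v y

/-- `x` is a valid allocation for the bidding profile `b`:
all `k` units are allocated, and every winning bid is at least every losing bid. -/
def ValidAlloc {n k : ℕ} (b : Fin n → Bid k) (x : Fin n → ℕ) : Prop :=
  (∑ i, x i) = k ∧
  ∀ i i' : Fin n, ∀ j j' : Fin k, (j : ℕ) < x i → x i' ≤ (j' : ℕ) → b i' j' ≤ b i j

/-- The sum of the first `x` entries of a bid vector. -/
def winSum {k : ℕ} (b : Bid k) (x : ℕ) : ℝ :=
  ∑ j : Fin k, if (j : ℕ) < x then b j else 0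

/-- No-overbidding of the bid vector `b` with respect to the valuation `v`. -/
def NoOverbid {k : ℕ} (v : ℕ → ℝ) (b : Bid k) : Prop :=
  ∀ s : ℕ, 1 ≤ s → s ≤ k → winSum b s ≤ v s

/-- The `j`-th highest element of a multiset of reals (`j` is 1-indexed; default `0`). -/
def kthHighest (s : Multiset ℝ) (j : ℕ) : ℝ :=
  ((s.sort (· ≤ ·)).reverse).getD (j - 1) 0

/-- The multiset of all bids submitted under the profile `b`. -/
def allBids {n k : ℕ} (b : Fin n → Bid k) : Multiset ℝ :=
  (Finset.univ : Finset (Fin n × Fin k)).val.map fun p => b p.1 p.2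

/-- The multiset of all bids submitted by the bidders other than `i`. -/
def othersBids {n k : ℕ} (b : Fin n → Bid k) (i : Fin n) : Multiset ℝ :=
  ((Finset.univ : Finset (Fin n × Fin k)).filter (fun p => p.1 ≠ i)).val.map
    fun p => b p.1 p.2

/-- `β_j` (1-indexed): the `j`-th lowest among the `k` highest elements of `s`,
i.e. the `(k+1-j)`-th highest element of `s`. -/
def betaBid (k : ℕ) (s : Multiset ℝ) (j : ℕ) : ℝ := kthHighest s (k + 1 - j)

/-- `∑_{j=1}^{x} β_j(s)`. -/
def betaSum (k : ℕ) (s : Multiset ℝ) (x : ℕ) : ℝ := ∑ j ∈ Finset.Icc 1 x, betaBid k s j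

/-- The uniform price: the `(k+1)`-st highest of all submitted bids (`0` by default). -/
def price {n k : ℕ} (b : Fin n → Bid k) : ℝ := kthHighest (allBids b) (k + 1)

/-- Discriminatory-pricing utility of bidder `i` under the allocation rule `X`. -/
def uDisc {n k : ℕ} (X : (Fin n → Bid k) → Fin n → ℕ) (v : ℕ → ℝ) (i : Fin n)
    (b : Fin n → Bid k) : ℝ :=
  v (X b i) - winSum (b i) (X b i)

/-- Uniform-pricing utility of bidder `i` under the allocation rule `X`. -/
def uUnif {n k : ℕ} (X : (Fin n → Bid k) → Fin n → ℕ) (v : ℕ → ℝ) (i : Fin n)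
    (b : Fin n → Bid k) : ℝ :=
  v (X b i) - (X b i : ℝ) * price b

/-- The `x`-th entry (1-indexed) of a bid vector, with the convention that it is `0`
for `x = 0` (or `x > k`). -/
def lastWinBid {k : ℕ} (b : Bid k) (x : ℕ) : ℝ :=
  if h : 1 ≤ x ∧ x ≤ k then b ⟨x - 1, by omega⟩ else 0

/-- Social welfare of the allocation `x` under the valuation profile `v`. -/
def SW {n : ℕ} (v : Fin n → ℕ → ℝ) (x : Fin n → ℕ) : ℝ := ∑ i, v i (x i)

/-! The template hypothesis, applied to the distribution that bidder `i` faces in equilibrium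
when its type is `θ i`, yields a deviation; the equilibrium condition says the equilibrium interim
utility is at least that of the deviation, so
`λ·vᵢ(xᵢ^v) ≤ μ·E[∑_{j ≤ xᵢ^v} β_j(b₋ᵢ)] + (interim equilibrium utility of i)`.
The `β`-term ignores bidder `i`'s own type and bid, so it is an ex-ante expectation, and
averaging the utility term over `θ i` also gives an ex-ante expectation.

For a fixed bid profile `b` and any split `y` of the `k` units, `∑ᵢ ∑_{j ≤ yᵢ} β_j(b₋ᵢ)` is at most
the sum of the `k` highest bids, i.e. the winning bids, hence at most the realised welfare by
no-overbidding; and since the uniform price is nonnegative, the total utility is also at most the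
realised welfare. Summing over bidders and types gives `λ·OPT ≤ (μ + 1)·E[SW]`. -/

def sortDesc (s : Multiset ℝ) : List ℝ := (s.sort (· ≤ ·)).reverse

theorem sortedGE_sortDesc (s : Multiset ℝ) : (sortDesc s).SortedGE :=
  List.sortedGE_reverse.2 (Multiset.pairwise_sort s (· ≤ ·)).sortedLE

@[simp] theorem coe_sortDesc (s : Multiset ℝ) : ((sortDesc s : List ℝ) : Multiset ℝ) = s := by
  simp [sortDesc, Multiset.sort_eq]

@[simp] theorem mem_sortDesc {s : Multiset ℝ} {x : ℝ} : x ∈ sortDesc s ↔ x ∈ s := by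
  simp [sortDesc, Multiset.mem_sort]

@[simp] theorem length_sortDesc (s : Multiset ℝ) : (sortDesc s).length = Multiset.card s := by
  simp [sortDesc]

theorem kthHighest_succ (s : Multiset ℝ) (m : ℕ) :
    kthHighest s (m + 1) = (sortDesc s).getD m 0 := rfl

namespace List

theorem getD_nonneg {l : List ℝ} (hl : ∀ x ∈ l, 0 ≤ x) (m : ℕ) : 0 ≤ l.getD m 0 := by
  rcases lt_or_ge m l.length with hm | hm
  · rw [getD_eq_getElem _ _ hm]; exact hl _ (getElem_mem hm)
  · rw [getD_eq_default _ _ hm]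

theorem SortedGE.antitone_getD {l : List ℝ} (hs : l.SortedGE) (hl : ∀ x ∈ l, 0 ≤ x) :
    Antitone (fun m => l.getD m 0) := by
  intro m m' hmm'
  rcases lt_or_ge m' l.length with hm' | hm'
  · simp only [getD_eq_getElem _ _ hm', getD_eq_getElem _ _ (hmm'.trans_lt hm')]
    exact hs.getElem_ge_getElem_of_le hmm'
  · simpa only [getD_eq_default _ _ hm'] using getD_nonneg hl m

theorem Sublist.getD_le_getD {l₁ l₂ : List ℝ} (h : l₁ <+ l₂) (hs : l₂.SortedGE)
    (hl : ∀ x ∈ l₂, 0 ≤ x) (m : ℕ) : l₁.getD m 0 ≤ l₂.getD m 0 := by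
  obtain ⟨f, hf⟩ := sublist_iff_exists_orderEmbedding_getElem?_eq.1 h
  rcases lt_or_ge m l₁.length with hm | hm
  · have hfm : f m < l₂.length := by
      have := hf m
      rw [getElem?_eq_getElem hm, eq_comm, getElem?_eq_some_iff] at this
      exact this.1
    have hget : l₁[m] = l₂[f m] := by
      have := hf m
      rwa [getElem?_eq_getElem hm, getElem?_eq_getElem hfm, Option.some_inj] at this
    rw [getD_eq_getElem _ _ hm, hget, ← getD_eq_getElem _ 0 hfm]
    exact hs.antitone_getD hl f.strictMono.le_apply
  · rw [getD_eq_default _ _ hm]; exact getD_nonneg hl m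

theorem sum_range_getD_append (l₁ l₂ : List ℝ) :
    ∑ m ∈ Finset.range l₁.length, (l₁ ++ l₂).getD m 0 = l₁.sum := by
  rw [Finset.sum_range, ← Fin.sum_univ_getElem]
  exact Finset.sum_congr rfl fun m _ => by rw [getD_append _ _ _ _ m.2, getD_eq_getElem]

end List

theorem kthHighest_nonneg {s : Multiset ℝ} (hs : ∀ x ∈ s, 0 ≤ x) (j : ℕ) :
    0 ≤ kthHighest s j :=
  List.getD_nonneg (fun x hx => hs x (mem_sortDesc.1 hx)) _

theorem kthHighest_antitone {s : Multiset ℝ} (hs : ∀ x ∈ s, 0 ≤ x) : Antitone (kthHighest s) :=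
  fun _ _ h => (sortedGE_sortDesc s).antitone_getD (fun x hx => hs x (mem_sortDesc.1 hx))
    (Nat.sub_le_sub_right h 1)

theorem kthHighest_mono {s t : Multiset ℝ} (hst : s ≤ t) (ht : ∀ x ∈ t, 0 ≤ x) (j : ℕ) :
    kthHighest s j ≤ kthHighest t j := by
  have hsub : (sortDesc s).Sublist (sortDesc t) := by
    refine List.sublist_of_subperm_of_sortedGE ?_ (sortedGE_sortDesc s) (sortedGE_sortDesc t)
    rw [← Multiset.coe_le, coe_sortDesc, coe_sortDesc]; exact hst
  exact hsub.getD_le_getD (sortedGE_sortDesc t) (fun x hx => ht x (mem_sortDesc.1 hx)) _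

theorem sortDesc_add {W L : Multiset ℝ} (h : ∀ w ∈ W, ∀ x ∈ L, x ≤ w) :
    sortDesc (W + L) = sortDesc W ++ sortDesc L := by
  refine List.Perm.eq_of_sortedGE (sortedGE_sortDesc _) ?_ ?_
  · exact List.Pairwise.sortedGE <| List.pairwise_append.2
      ⟨(sortedGE_sortDesc W).pairwise, (sortedGE_sortDesc L).pairwise,
        fun w hw x hx => h w (mem_sortDesc.1 hw) x (mem_sortDesc.1 hx)⟩
  · rw [← Multiset.coe_eq_coe, ← Multiset.coe_add, coe_sortDesc, coe_sortDesc, coe_sortDesc]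

theorem sum_range_kthHighest_add {W L : Multiset ℝ} {k : ℕ} (hW : Multiset.card W = k)
    (h : ∀ w ∈ W, ∀ x ∈ L, x ≤ w) :
    ∑ m ∈ Finset.range k, kthHighest (W + L) (m + 1) = W.sum := by
  simp only [kthHighest_succ, sortDesc_add h]
  rw [← hW, ← length_sortDesc, List.sum_range_getD_append, ← Multiset.sum_coe, coe_sortDesc]

section ProductDistribution

variable {ι : Type*} [Fintype ι] {β : ι → Type*}

def prodProb (p : ∀ i, β i → ℝ) (x : ∀ i, β i) : ℝ := ∏ i, p i (x i)

variable {p p' : ∀ i, β i → ℝ}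

theorem prodProb_nonneg (hp : ∀ i t, 0 ≤ p i t) (x : ∀ i, β i) : 0 ≤ prodProb p x :=
  Finset.prod_nonneg fun i _ => hp i (x i)

theorem pos_of_prodProb_pos (hp : ∀ i t, 0 ≤ p i t) {x : ∀ i, β i} (h : 0 < prodProb p x)
    (i : ι) : 0 < p i (x i) :=
  (hp i (x i)).lt_of_ne' ((Finset.prod_ne_zero_iff.1 h.ne') i (Finset.mem_univ i))

variable [DecidableEq ι] [∀ i, Fintype (β i)]

theorem sum_prodProb (hp : ∀ i, ∑ t, p i t = 1) : ∑ x, prodProb p x = 1 := by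
  simp only [prodProb, ← Fintype.prod_sum, hp, Finset.prod_const_one]

omit [∀ i, Fintype (β i)] in
theorem prodProb_update_mul {i : ι} (hpp' : ∀ j, j ≠ i → p j = p' j) (x : ∀ i, β i) (t : β i) :
    prodProb p' (Function.update x i t) * p i (x i) = prodProb p x * p' i t := by
  have hrest : ∏ j ∈ {i}ᶜ, p' j (Function.update x i t j) = ∏ j ∈ {i}ᶜ, p j (x j) :=
    Finset.prod_congr rfl fun j hj => by
      have hji : j ≠ i := by simpa using hj
      rw [Function.update_of_ne hji, hpp' j hji]
  simp only [prodProb, Fintype.prod_eq_mul_prod_compl i, Function.update_self, hrest]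
  ring

/-- Resampling coordinate `i` of `x ∼ p` from `p' i` yields `x ∼ p'`. -/
theorem sum_prodProb_mul_sum_update {i : ι} (hpp' : ∀ j, j ≠ i → p j = p' j)
    (hp : ∑ t, p i t = 1) (F : (∀ i, β i) → ℝ) :
    ∑ x, prodProb p x * ∑ t, p' i t * F (Function.update x i t) = ∑ x, prodProb p' x * F x := by
  let e : Equiv.Perm ((∀ i, β i) × β i) :=
    Function.Involutive.toPerm (fun z => (Function.update z.1 i z.2, z.1 i)) fun z => by simp
  calc ∑ x, prodProb p x * ∑ t, p' i t * F (Function.update x i t)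
      = ∑ z, prodProb p' (e z).1 * p i (e z).2 * F (e z).1 := by
        simp only [Finset.mul_sum, Fintype.sum_prod_type]
        refine Finset.sum_congr rfl fun x _ => Finset.sum_congr rfl fun t _ => ?_
        change _ = prodProb p' (Function.update x i t) * p i (x i) * F (Function.update x i t)
        rw [prodProb_update_mul hpp']
        ring
    _ = ∑ z : (∀ i, β i) × β i, prodProb p' z.1 * p i z.2 * F z.1 :=
        Equiv.sum_comp e fun z => prodProb p' z.1 * p i z.2 * F z.1
    _ = ∑ x, prodProb p' x * F x := by
        rw [Fintype.sum_prod_type]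
        refine Finset.sum_congr rfl fun x _ => ?_
        dsimp only
        rw [← Finset.sum_mul, ← Finset.mul_sum, hp, mul_one]

theorem sum_prodProb_mul_apply (hp : ∀ i, ∑ t, p i t = 1) (i : ι) (φ : β i → ℝ) :
    ∑ x, prodProb p x * φ (x i) = ∑ t, p i t * φ t := by
  have := sum_prodProb_mul_sum_update (p' := p) (fun _ _ => rfl) (hp i) fun x => φ (x i)
  simp only [Function.update_self, ← Finset.sum_mul, sum_prodProb hp, one_mul] at this
  exact this.symm

theorem sum_prodProb_mul_sum_prodProb_mul_update (hp : ∀ i, ∑ t, p i t = 1) (i : ι)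
    (Ψ : (∀ i, β i) → ℝ) :
    ∑ x, prodProb p x * ∑ y, prodProb p y * Ψ (Function.update y i (x i)) =
      ∑ y, prodProb p y * Ψ y := by
  calc ∑ x, prodProb p x * ∑ y, prodProb p y * Ψ (Function.update y i (x i))
      = ∑ y, prodProb p y * ∑ x, prodProb p x * Ψ (Function.update y i (x i)) := by
        simp only [Finset.mul_sum]
        rw [Finset.sum_comm]
        exact Finset.sum_congr rfl fun y _ => Finset.sum_congr rfl fun x _ => mul_left_comm _ _ _
    _ = ∑ y, prodProb p y * ∑ t, p i t * Ψ (Function.update y i t) :=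
        Finset.sum_congr rfl fun y _ =>
          congrArg _ (sum_prodProb_mul_apply hp i fun t => Ψ (Function.update y i t))
    _ = ∑ y, prodProb p y * Ψ y := sum_prodProb_mul_sum_update (fun _ _ => rfl) (hp i) Ψ

theorem sum_prodProb_mul_eq_of_update_eq {i : ι} (hpp' : ∀ j, j ≠ i → p j = p' j)
    (hp : ∑ t, p i t = 1) (hp' : ∑ t, p' i t = 1) {g : (∀ i, β i) → ℝ}
    (hg : ∀ x t, g (Function.update x i t) = g x) :
    ∑ x, prodProb p x * g x = ∑ x, prodProb p' x * g x := by
  rw [← sum_prodProb_mul_sum_update hpp' hp]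
  simp only [hg, ← Finset.sum_mul, hp', one_mul]

end ProductDistribution

theorem UnifBid.stdBid {k : ℕ} {b : Bid k} (h : UnifBid b) : StdBid b := by
  obtain ⟨c, hc, q, -, hb⟩ := h
  refine ⟨fun j j' hjj' => ?_, fun j => ?_⟩ <;> simp only [hb]
  · have : (j : ℕ) ≤ j' := hjj'
    split_ifs <;> first | exact le_rfl | exact hc | omega
  · split_ifs <;> first | exact le_rfl | exact hc

theorem stdBid_of_mem {k : ℕ} {S : Set (Bid k)}
    (hS : S = {b : Bid k | StdBid b} ∨ S = {b : Bid k | UnifBid b}) {b : Bid k} (hb : b ∈ S) :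
    StdBid b := by
  rcases hS with rfl | rfl
  exacts [hb, UnifBid.stdBid hb]

theorem winSum_zero {k : ℕ} (c : Bid k) : winSum c 0 = 0 := by simp [winSum]

theorem winSum_le_of_noOverbid {k : ℕ} {v : ℕ → ℝ} {c : Bid k} (hv : v 0 = 0)
    (h : NoOverbid v c) {x : ℕ} (hx : x ≤ k) : winSum c x ≤ v x := by
  rcases Nat.eq_zero_or_pos x with rfl | hpos
  · rw [winSum_zero, hv]
  · exact h x hpos hx

theorem betaSum_eq_sum_range (k : ℕ) (s : Multiset ℝ) (x : ℕ) :
    betaSum k s x = ∑ j ∈ Finset.range x, kthHighest s (k - j) := by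
  rw [betaSum, ← Finset.Ico_add_one_right_eq_Icc, Finset.sum_Ico_eq_sum_range]
  exact Finset.sum_congr rfl fun j _ => by rw [betaBid]; congr 1; omega

/-- Packing the blocks `[0, y i)` side by side only moves indices up. -/
theorem Monotone.sum_sum_range_le {ι : Type*} {g : ℕ → ℝ} (hg : Monotone g) (s : Finset ι)
    (y : ι → ℕ) :
    ∑ i ∈ s, ∑ j ∈ Finset.range (y i), g j ≤ ∑ j ∈ Finset.range (∑ i ∈ s, y i), g j := by
  classical
  induction s using Finset.induction_on with
  | empty => simp
  | insert i s hi ih =>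
    rw [Finset.sum_insert hi, Finset.sum_insert hi, Finset.sum_range_add]
    refine add_le_add_right (ih.trans (Finset.sum_le_sum fun j _ => ?_)) _
    exact hg (Nat.le_add_left j _)

section Profile

variable {n k : ℕ}

theorem othersBids_congr {b b' : Fin n → Bid k} {i : Fin n} (h : ∀ j, j ≠ i → b j = b' j) :
    othersBids b i = othersBids b' i :=
  Multiset.map_congr rfl fun p hp => by
    rw [Finset.mem_val, Finset.mem_filter] at hp
    rw [h p.1 hp.2]

theorem othersBids_le_allBids (b : Fin n → Bid k) (i : Fin n) : othersBids b i ≤ allBids b :=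
  Multiset.map_le_map (by rw [Finset.filter_val]; exact Multiset.filter_le _ _)

theorem nonneg_of_mem_allBids {b : Fin n → Bid k} (hb : ∀ i j, 0 ≤ b i j) :
    ∀ z ∈ allBids b, 0 ≤ z := by
  simp only [allBids, Multiset.mem_map]
  rintro _ ⟨p, -, rfl⟩
  exact hb p.1 p.2

theorem price_nonneg {b : Fin n → Bid k} (hb : ∀ i j, 0 ≤ b i j) : 0 ≤ price b :=
  kthHighest_nonneg (nonneg_of_mem_allBids hb) _

def winningBids (b : Fin n → Bid k) (x : Fin n → ℕ) : Multiset ℝ :=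
  ((Finset.univ : Finset (Fin n × Fin k)).filter fun p => (p.2 : ℕ) < x p.1).val.map
    fun p => b p.1 p.2

def losingBids (b : Fin n → Bid k) (x : Fin n → ℕ) : Multiset ℝ :=
  ((Finset.univ : Finset (Fin n × Fin k)).filter fun p => ¬ (p.2 : ℕ) < x p.1).val.map
    fun p => b p.1 p.2

theorem allBids_eq_add (b : Fin n → Bid k) (x : Fin n → ℕ) :
    allBids b = winningBids b x + losingBids b x := by
  rw [winningBids, losingBids, ← Multiset.map_add, Finset.filter_val, Finset.filter_val,
    Multiset.filter_add_not, allBids]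

theorem sum_winningBids (b : Fin n → Bid k) (x : Fin n → ℕ) :
    (winningBids b x).sum = ∑ i, winSum (b i) (x i) := by
  rw [winningBids, ← Finset.sum_eq_multiset_sum, Finset.sum_filter, Fintype.sum_prod_type]
  rfl

namespace ValidAlloc

variable {b : Fin n → Bid k} {x : Fin n → ℕ}

theorem le (hx : ValidAlloc b x) (i : Fin n) : x i ≤ k :=
  hx.1 ▸ Finset.single_le_sum (fun _ _ => Nat.zero_le _) (Finset.mem_univ i)

theorem card_winningBids (hx : ValidAlloc b x) : Multiset.card (winningBids b x) = k := by
  rw [winningBids, Multiset.card_map, ← Finset.card_def, Finset.card_filter,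
    Fintype.sum_prod_type]
  simp only [← Finset.card_filter, Fin.card_filter_val_lt, fun i => min_eq_right (hx.le i)]
  exact hx.1

theorem le_of_mem_losingBids (hx : ValidAlloc b x) :
    ∀ w ∈ winningBids b x, ∀ z ∈ losingBids b x, z ≤ w := by
  simp only [winningBids, losingBids, Multiset.mem_map, Finset.mem_val, Finset.mem_filter]
  rintro _ ⟨p, ⟨-, hp⟩, rfl⟩ _ ⟨p', ⟨-, hp'⟩, rfl⟩
  exact hx.2 p.1 p'.1 p.2 p'.2 hp (not_lt.1 hp')

/-- Under a valid allocation the `k` highest bids are exactly the winning bids. -/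
theorem sum_range_kthHighest (hx : ValidAlloc b x) :
    ∑ m ∈ Finset.range k, kthHighest (allBids b) (m + 1) = ∑ i, winSum (b i) (x i) := by
  rw [allBids_eq_add b x,
    sum_range_kthHighest_add hx.card_winningBids hx.le_of_mem_losingBids, sum_winningBids]

end ValidAlloc

theorem sum_betaSum_othersBids_le {b : Fin n → Bid k} {x y : Fin n → ℕ} (hb : ∀ i j, 0 ≤ b i j)
    (hx : ValidAlloc b x) (hy : ∑ i, y i = k) :
    ∑ i, betaSum k (othersBids b i) (y i) ≤ ∑ i, winSum (b i) (x i) := by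
  have hnn := nonneg_of_mem_allBids hb
  have hmono : Monotone fun j => kthHighest (allBids b) (k - j) :=
    fun _ _ h => kthHighest_antitone hnn (Nat.sub_le_sub_left h k)
  calc ∑ i, betaSum k (othersBids b i) (y i)
      ≤ ∑ i, ∑ j ∈ Finset.range (y i), kthHighest (allBids b) (k - j) := by
        simp only [betaSum_eq_sum_range]
        gcongr
        exact kthHighest_mono (othersBids_le_allBids b _) hnn _
    _ ≤ ∑ j ∈ Finset.range k, kthHighest (allBids b) (k - j) :=
        hy ▸ hmono.sum_sum_range_le Finset.univ y
    _ = ∑ m ∈ Finset.range k, kthHighest (allBids b) (m + 1) := by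
        rw [← Finset.sum_range_reflect]
        exact Finset.sum_congr rfl fun j hj => by rw [Finset.mem_range] at hj; congr 1; omega
    _ = ∑ i, winSum (b i) (x i) := hx.sum_range_kthHighest

theorem sum_betaSum_othersBids_le_SW {b : Fin n → Bid k} {x y : Fin n → ℕ} {v : Fin n → ℕ → ℝ}
    (hb : ∀ i j, 0 ≤ b i j) (hx : ValidAlloc b x) (hv : ∀ i, v i 0 = 0)
    (hno : ∀ i, NoOverbid (v i) (b i)) (hy : ∑ i, y i = k) :
    ∑ i, betaSum k (othersBids b i) (y i) ≤ SW v x :=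
  (sum_betaSum_othersBids_le hb hx hy).trans
    (Finset.sum_le_sum fun i _ => winSum_le_of_noOverbid (hv i) (hno i) (hx.le i))

theorem sum_uUnif_le_SW {b : Fin n → Bid k} (hb : ∀ i j, 0 ≤ b i j)
    (X : (Fin n → Bid k) → Fin n → ℕ) (v : Fin n → ℕ → ℝ) :
    ∑ i, uUnif X (v i) i b ≤ SW v (X b) :=
  Finset.sum_le_sum fun _ _ =>
    sub_le_self _ (mul_nonneg (Nat.cast_nonneg _) (price_nonneg hb))

end Profile

section Expectation

variable {n : ℕ} {T O : Fin n → Type} {pr : ∀ i, T i → ℝ} {wt : ∀ i, T i → O i → ℝ}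

def interimWeight (pr : ∀ i, T i → ℝ) (wt : ∀ i, T i → O i → ℝ) (i : Fin n) (t : T i)
    (z : (∀ i, T i) × (∀ i, O i)) : ℝ :=
  prodProb pr z.1 * prodProb (fun j => wt j (Function.update z.1 i t j)) z.2

theorem interimWeight_nonneg (hpr : ∀ i t, 0 ≤ pr i t) (hwt : ∀ i t o, 0 ≤ wt i t o) (i : Fin n)
    (t : T i) (z : (∀ i, T i) × (∀ i, O i)) : 0 ≤ interimWeight pr wt i t z :=
  mul_nonneg (prodProb_nonneg hpr _) (prodProb_nonneg (fun j => hwt j _) _)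

theorem pos_of_interimWeight_pos (hpr : ∀ i t, 0 ≤ pr i t) (hwt : ∀ i t o, 0 ≤ wt i t o)
    {i : Fin n} {t : T i} {z : (∀ i, T i) × (∀ i, O i)} (h : 0 < interimWeight pr wt i t z)
    (j : Fin n) : 0 < wt j (Function.update z.1 i t j) (z.2 j) :=
  pos_of_prodProb_pos (fun j => hwt j _)
    (pos_of_mul_pos_right h (prodProb_nonneg hpr _)) j

variable [∀ i, Fintype (T i)] [∀ i, Fintype (O i)]

/-- Expectation over types `θ ∼ pr` and the outcomes `ω ∼ wt θ` of the mixed strategies. -/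
def exAnte (pr : ∀ i, T i → ℝ) (wt : ∀ i, T i → O i → ℝ)
    (F : (∀ i, T i) → (∀ i, O i) → ℝ) : ℝ :=
  ∑ θ, ∑ ω, (prodProb pr θ * prodProb (fun i => wt i (θ i)) ω) * F θ ω

/-- The same expectation conditioned on bidder `i` having type `t`: coordinate `i` of `θ` is
overwritten by `t`, so its prior factor sums out to `1`. -/
def interim (pr : ∀ i, T i → ℝ) (wt : ∀ i, T i → O i → ℝ) (i : Fin n) (t : T i)
    (F : (∀ i, T i) → (∀ i, O i) → ℝ) : ℝ :=
  ∑ θ, ∑ ω, (prodProb pr θ * prodProb (fun j => wt j (Function.update θ i t j)) ω) *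
    F (Function.update θ i t) ω

theorem interim_eq_sum_interimWeight (i : Fin n) (t : T i) (F : (∀ i, T i) → (∀ i, O i) → ℝ) :
    interim pr wt i t F = ∑ z, interimWeight pr wt i t z * F (Function.update z.1 i t) z.2 := by
  rw [Fintype.sum_prod_type]
  rfl

theorem sum_interimWeight (hpr : ∀ i, ∑ t, pr i t = 1) (hwt : ∀ i t, ∑ o, wt i t o = 1)
    (i : Fin n) (t : T i) : ∑ z, interimWeight pr wt i t z = 1 := by
  simp only [interimWeight, Fintype.sum_prod_type, ← Finset.mul_sum,
    sum_prodProb fun j => hwt j _, mul_one, sum_prodProb hpr]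

theorem exAnte_mono (hpr : ∀ i t, 0 ≤ pr i t) (hwt : ∀ i t o, 0 ≤ wt i t o)
    {F G : (∀ i, T i) → (∀ i, O i) → ℝ}
    (h : ∀ θ ω, 0 < prodProb (fun i => wt i (θ i)) ω → F θ ω ≤ G θ ω) :
    exAnte pr wt F ≤ exAnte pr wt G := by
  refine Finset.sum_le_sum fun θ _ => Finset.sum_le_sum fun ω _ => ?_
  rcases (prodProb_nonneg (fun i => hwt i (θ i)) ω).eq_or_lt with hω | hω
  · simp [← hω]
  · exact mul_le_mul_of_nonneg_left (h θ ω hω) (mul_nonneg (prodProb_nonneg hpr θ) hω.le)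

theorem sum_exAnte {ι : Type*} (s : Finset ι) (F : ι → (∀ i, T i) → (∀ i, O i) → ℝ) :
    ∑ a ∈ s, exAnte pr wt (F a) = exAnte pr wt fun θ ω => ∑ a ∈ s, F a θ ω := by
  simp only [exAnte, Finset.mul_sum]
  rw [Finset.sum_comm]
  exact Finset.sum_congr rfl fun _ _ => Finset.sum_comm

theorem sum_prodProb_mul_interim (hpr : ∀ i, ∑ t, pr i t = 1) (i : Fin n)
    (F : T i → (∀ i, T i) → (∀ i, O i) → ℝ) :
    ∑ θ, prodProb pr θ * interim pr wt i (θ i) (F (θ i)) =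
      exAnte pr wt fun τ ω => F (τ i) τ ω := by
  let Ψ : (∀ i, T i) → ℝ := fun τ => ∑ ω, prodProb (fun j => wt j (τ j)) ω * F (τ i) τ ω
  have hinterim : ∀ t,
      interim pr wt i t (F t) = ∑ σ, prodProb pr σ * Ψ (Function.update σ i t) := fun t => by
    simp only [interim, Ψ, Function.update_self, Finset.mul_sum, mul_assoc]
  simp only [hinterim]
  rw [sum_prodProb_mul_sum_prodProb_mul_update hpr i Ψ]
  simp only [exAnte, Ψ, Finset.mul_sum, mul_assoc]

theorem interim_eq_exAnte (hwt : ∀ i t, ∑ o, wt i t o = 1) (i : Fin n) (t : T i)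
    {G : (∀ i, T i) → (∀ i, O i) → ℝ}
    (hG : ∀ θ ω s o, G (Function.update θ i s) (Function.update ω i o) = G θ ω) :
    interim pr wt i t G = exAnte pr wt G := by
  refine Finset.sum_congr rfl fun σ _ => ?_
  have hσ : ∀ ω, G (Function.update σ i t) ω = G σ ω := fun ω => by
    simpa only [Function.update_eq_self] using hG σ ω t (ω i)
  simp only [hσ, mul_assoc, ← Finset.mul_sum]
  congr 1
  refine sum_prodProb_mul_eq_of_update_eq (i := i) (fun j hj => ?_) (hwt _ _) (hwt _ _)
    fun ω o => ?_
  · simp only [Function.update_of_ne hj]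
  · simpa only [Function.update_eq_self] using hG σ ω (σ i) o

end Expectation

section BayesianAuction

variable {n k : ℕ} {T O : Fin n → Type} [∀ i, Fintype (T i)] [∀ i, Fintype (O i)]
  {pr : ∀ i, T i → ℝ} {wt : ∀ i, T i → O i → ℝ} {B : ∀ i, T i → O i → Bid k}
  {X : (Fin n → Bid k) → Fin n → ℕ} {val : ∀ i, T i → ℕ → ℝ}

def bidProfile (B : ∀ i, T i → O i → Bid k) (θ : ∀ i, T i) (ω : ∀ i, O i) : Fin n → Bid k :=
  fun i => B i (θ i) (ω i)

theorem sum_prodProb_mul_sum_exAnte_betaSum_le (hpr0 : ∀ i t, 0 ≤ pr i t)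
    (hpr1 : ∀ i, ∑ t, pr i t = 1) (hwt0 : ∀ i t o, 0 ≤ wt i t o)
    (hX : ∀ b, ValidAlloc b (X b)) (hval : ∀ i t, val i t 0 = 0)
    (hBnn : ∀ i t o, 0 < wt i t o → ∀ j, 0 ≤ B i t o j)
    (hBno : ∀ i t o, 0 < wt i t o → NoOverbid (val i t) (B i t o))
    {y : (∀ i, T i) → Fin n → ℕ} (hy : ∀ θ, ∑ i, y θ i = k) :
    ∑ θ, prodProb pr θ *
        ∑ i, exAnte pr wt (fun σ ω => betaSum k (othersBids (bidProfile B σ ω) i) (y θ i))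
      ≤ exAnte pr wt fun θ ω => SW (fun i => val i (θ i)) (X (bidProfile B θ ω)) := by
  set E := exAnte pr wt fun θ ω => SW (fun i => val i (θ i)) (X (bidProfile B θ ω))
  have hθ : ∀ θ,
      ∑ i, exAnte pr wt (fun σ ω => betaSum k (othersBids (bidProfile B σ ω) i) (y θ i)) ≤ E := by
    intro θ
    rw [sum_exAnte]
    refine exAnte_mono hpr0 hwt0 fun σ ω hω => ?_
    have hpos := pos_of_prodProb_pos (fun i => hwt0 i (σ i)) hω
    exact sum_betaSum_othersBids_le_SW (fun i => hBnn _ _ _ (hpos i)) (hX _)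
      (fun i => hval i _) (fun i => hBno _ _ _ (hpos i)) (hy θ)
  calc _ ≤ ∑ θ, prodProb pr θ * E :=
        Finset.sum_le_sum fun θ _ => mul_le_mul_of_nonneg_left (hθ θ) (prodProb_nonneg hpr0 θ)
    _ = E := by rw [← Finset.sum_mul, sum_prodProb hpr1, one_mul]

theorem sum_sum_prodProb_mul_interim_uUnif_le (hpr0 : ∀ i t, 0 ≤ pr i t)
    (hpr1 : ∀ i, ∑ t, pr i t = 1) (hwt0 : ∀ i t o, 0 ≤ wt i t o)
    (hBnn : ∀ i t o, 0 < wt i t o → ∀ j, 0 ≤ B i t o j) :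
    ∑ i, ∑ θ, prodProb pr θ *
        interim pr wt i (θ i) (fun τ ω => uUnif X (val i (θ i)) i (bidProfile B τ ω))
      ≤ exAnte pr wt fun θ ω => SW (fun i => val i (θ i)) (X (bidProfile B θ ω)) :=
  calc _ = ∑ i, exAnte pr wt (fun τ ω => uUnif X (val i (τ i)) i (bidProfile B τ ω)) :=
        Finset.sum_congr rfl fun i _ =>
          sum_prodProb_mul_interim hpr1 i fun s τ ω => uUnif X (val i s) i (bidProfile B τ ω)
    _ = exAnte pr wt (fun τ ω => ∑ i, uUnif X (val i (τ i)) i (bidProfile B τ ω)) :=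
        sum_exAnte _ _
    _ ≤ _ := exAnte_mono hpr0 hwt0 fun θ _ hω =>
        sum_uUnif_le_SW (fun i => hBnn _ _ _ (pos_of_prodProb_pos (fun i => hwt0 i (θ i)) hω i))
          X fun i => val i (θ i)

theorem le_add_of_deviation (hwt : ∀ i t, ∑ o, wt i t o = 1) {i : Fin n} {t : T i}
    {v : ℕ → ℝ} {y : ℕ} {c : Bid k} {a mu : ℝ}
    (hc : a - mu * ∑ z, interimWeight pr wt i t z *
          betaSum k (othersBids (bidProfile B (Function.update z.1 i t) z.2) i) y ≤
        ∑ z, interimWeight pr wt i t z *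
          uUnif X v i (Function.update (bidProfile B (Function.update z.1 i t) z.2) i c))
    (hbne : interim pr wt i t (fun τ ω => uUnif X v i (Function.update (bidProfile B τ ω) i c)) ≤
      interim pr wt i t (fun τ ω => uUnif X v i (bidProfile B τ ω))) :
    a ≤ mu * exAnte pr wt (fun σ ω => betaSum k (othersBids (bidProfile B σ ω) i) y) +
      interim pr wt i t (fun τ ω => uUnif X v i (bidProfile B τ ω)) := by
  rw [← interim_eq_exAnte hwt i t fun _ _ _ _ => congrArg (betaSum k · y)
    (othersBids_congr fun j hj => by simp only [bidProfile, Function.update_of_ne hj])]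
  rw [interim_eq_sum_interimWeight, interim_eq_sum_interimWeight] at hbne ⊢
  linarith

end BayesianAuction

theorem mul_sum_mul_sum_le_of_le_mul_add {Θ ι : Type*} [Fintype Θ] [Fintype ι] {P : Θ → ℝ}
    (hP : ∀ θ, 0 ≤ P θ) {lam mu E : ℝ} (hmu : 0 ≤ mu) {V D U : Θ → ι → ℝ}
    (h : ∀ θ i, lam * V θ i ≤ mu * D θ i + U θ i) (hD : ∑ θ, P θ * ∑ i, D θ i ≤ E)
    (hU : ∑ i, ∑ θ, P θ * U θ i ≤ E) :
    lam * ∑ θ, P θ * ∑ i, V θ i ≤ (mu + 1) * E :=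
  calc lam * ∑ θ, P θ * ∑ i, V θ i = ∑ θ, P θ * ∑ i, lam * V θ i := by
        simp only [Finset.mul_sum, mul_left_comm lam]
    _ ≤ ∑ θ, P θ * ∑ i, (mu * D θ i + U θ i) := by
        gcongr with θ _ i
        exacts [hP θ, h θ i]
    _ = mu * ∑ θ, P θ * ∑ i, D θ i + ∑ i, ∑ θ, P θ * U θ i := by
        simp only [Finset.sum_add_distrib, mul_add, Finset.mul_sum, mul_left_comm _ mu]
        exact congrArg _ Finset.sum_comm
    _ ≤ mu * E + E := add_le_add (mul_le_mul_of_nonneg_left hD hmu) hU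
    _ = (mu + 1) * E := by ring

theorem stmt7_general
    (n k : ℕ)
    (lam mu : ℝ) (hlam : 0 < lam) (hmu : 0 ≤ mu)
    -- finite type spaces and the product prior
    (T : Fin n → Type) [∀ i, Fintype (T i)]
    (pr : ∀ i, T i → ℝ)
    (hpr0 : ∀ i t, 0 ≤ pr i t) (hpr1 : ∀ i, ∑ t, pr i t = 1)
    -- the (private) valuations
    (val : ∀ i, T i → ℕ → ℝ)
    (hval : ∀ i t, IsValuation k (val i t))
    -- the bidding format: standard or uniform
    (S : Set (Bid k))
    (hS : S = {b : Bid k | StdBid b} ∨ S = {b : Bid k | UnifBid b})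
    -- the allocation rule
    (X : (Fin n → Bid k) → Fin n → ℕ)
    (hX : ∀ b, ValidAlloc b (X b))
    -- a welfare-optimal allocation for each valuation profile
    (xopt : (∀ j, T j) → Fin n → ℕ)
    (hxoptk : ∀ θ, (∑ i, xopt θ i) = k)
    -- the template hypothesis: for every valuation profile, every bidder `i` and every
    -- finitely supported distribution over no-overbidding profiles from the strategy
    -- spaces, there is a no-overbidding deviation `c ∈ S` with
    -- `E[uᵢ(c, b₋ᵢ)] ≥ λ·vᵢ(xᵢ^v) - μ·E[∑_{j=1}^{xᵢ^v} β_j(b₋ᵢ)]`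
    (hT : ∀ (θ : (∀ j, T j)) (i : Fin n) (P : Type) [Fintype P] (q : P → ℝ),
      (∀ ω, 0 ≤ q ω) → (∑ ω, q ω) = 1 →
      ∀ bo : P → Fin n → Bid k,
        (∀ ω, 0 < q ω → ∀ j, j ≠ i →
          bo ω j ∈ S ∧ ∃ t : T j, NoOverbid (val j t) (bo ω j)) →
        ∃ c ∈ S, NoOverbid (val i (θ i)) c ∧
          lam * val i (θ i) (xopt θ i)
              - mu * ∑ ω, q ω * betaSum k (othersBids (bo ω) i) (xopt θ i)
            ≤ ∑ ω, q ω * uUnif X (val i (θ i)) i (Function.update (bo ω) i c))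
    -- the mixed strategies: finitely supported distributions over bid vectors in `S`
    (O : Fin n → Type) [∀ i, Fintype (O i)]
    (wt : ∀ i, T i → O i → ℝ)
    (hwt0 : ∀ i t ω, 0 ≤ wt i t ω) (hwt1 : ∀ i t, ∑ ω, wt i t ω = 1)
    (B : ∀ i, T i → O i → Bid k)
    (hBS : ∀ i t ω, 0 < wt i t ω → B i t ω ∈ S)
    -- every bid vector in the support of every equilibrium strategy does not overbid
    (hBno : ∀ i t ω, 0 < wt i t ω → NoOverbid (val i t) (B i t ω))
    -- `B` is a (mixed) Bayes-Nash equilibrium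
    (hBNE : ∀ (i : Fin n) (ti : T i), ∀ c ∈ S,
      (∑ θ : (∀ j, T j), ∑ ω : (∀ j, O j),
        ((∏ j, pr j (θ j)) * ∏ j, wt j (Function.update θ i ti j) (ω j)) *
          uUnif X (val i ti) i
            (Function.update (fun j => B j (Function.update θ i ti j) (ω j)) i c))
      ≤ ∑ θ : (∀ j, T j), ∑ ω : (∀ j, O j),
        ((∏ j, pr j (θ j)) * ∏ j, wt j (Function.update θ i ti j) (ω j)) *
          uUnif X (val i ti) i (fun j => B j (Function.update θ i ti j) (ω j))) :
    (∑ θ : (∀ j, T j), (∏ j, pr j (θ j)) * SW (fun i => val i (θ i)) (xopt θ))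
      ≤ ((mu + 1) / lam) *
        ∑ θ : (∀ j, T j), ∑ ω : (∀ j, O j),
          ((∏ j, pr j (θ j)) * ∏ j, wt j (θ j) (ω j)) *
            SW (fun i => val i (θ i)) (X (fun j => B j (θ j) (ω j))) := by
  have hBnn : ∀ i t o, 0 < wt i t o → ∀ j, 0 ≤ B i t o j :=
    fun i t o h => (stdBid_of_mem hS (hBS i t o h)).2
  have hdev : ∀ θ i, lam * val i (θ i) (xopt θ i) ≤
      mu * exAnte pr wt (fun σ ω => betaSum k (othersBids (bidProfile B σ ω) i) (xopt θ i)) +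
        interim pr wt i (θ i) (fun τ ω => uUnif X (val i (θ i)) i (bidProfile B τ ω)) := by
    intro θ i
    obtain ⟨c, hcS, -, hc⟩ := hT θ i _ _ (interimWeight_nonneg hpr0 hwt0 i (θ i))
      (sum_interimWeight hpr1 hwt1 i (θ i))
      (fun z => bidProfile B (Function.update z.1 i (θ i)) z.2) fun z hz j _ =>
        have h := pos_of_interimWeight_pos hpr0 hwt0 hz j
        ⟨hBS _ _ _ h, _, hBno _ _ _ h⟩
    exact le_add_of_deviation hwt1 hc (hBNE i (θ i) c hcS)
  rw [div_mul_eq_mul_div, le_div_iff₀' hlam]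
  exact mul_sum_mul_sum_le_of_le_mul_add (prodProb_nonneg hpr0) hmu hdev
    (sum_prodProb_mul_sum_exAnte_betaSum_le hpr0 hpr1 hwt0 hX (fun i t => (hval i t).1) hBnn hBno
      hxoptk)
    (sum_sum_prodProb_mul_interim_uUnif_le hpr0 hpr1 hwt0 hBnn)

/-- Proof template for uniform pricing: if for every valuation
profile, bidder `i`, and finitely supported distribution over no-overbidding bid
profiles there is a deviation `c ∈ S` with
`E[uᵢ(c, b₋ᵢ)] ≥ λ·vᵢ(xᵢ^v) - μ·E[∑_{j ≤ xᵢ^v} β_j(b₋ᵢ)]`, then the Bayesian Price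
of Anarchy of the Uniform Price Auction is at most `(μ + 1) / λ`. -/
theorem stmt7
    (n k : ℕ) (hk : 1 ≤ k)
    (lam mu : ℝ) (hlam : 0 < lam) (hmu : 0 ≤ mu)
    -- finite type spaces and the product prior
    (T : Fin n → Type) [∀ i, Fintype (T i)]
    (pr : ∀ i, T i → ℝ)
    (hpr0 : ∀ i t, 0 ≤ pr i t) (hpr1 : ∀ i, ∑ t, pr i t = 1)
    -- the (private) valuations
    (val : ∀ i, T i → ℕ → ℝ)
    (hval : ∀ i t, IsValuation k (val i t))
    -- the bidding format: standard or uniform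
    (S : Set (Bid k))
    (hS : S = {b : Bid k | StdBid b} ∨ S = {b : Bid k | UnifBid b})
    -- the allocation rule
    (X : (Fin n → Bid k) → Fin n → ℕ)
    (hX : ∀ b, ValidAlloc b (X b))
    -- a welfare-optimal allocation for each valuation profile
    (xopt : (∀ j, T j) → Fin n → ℕ)
    (hxoptk : ∀ θ, (∑ i, xopt θ i) = k)
    (hxoptmax : ∀ θ (y : Fin n → ℕ), (∑ i, y i) = k →
      SW (fun i => val i (θ i)) y ≤ SW (fun i => val i (θ i)) (xopt θ))
    -- the template hypothesis: for every valuation profile, every bidder `i` and every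
    -- finitely supported distribution over no-overbidding profiles from the strategy
    -- spaces, there is a no-overbidding deviation `c ∈ S` with
    -- `E[uᵢ(c, b₋ᵢ)] ≥ λ·vᵢ(xᵢ^v) - μ·E[∑_{j=1}^{xᵢ^v} β_j(b₋ᵢ)]`
    (hT : ∀ (θ : (∀ j, T j)) (i : Fin n) (P : Type) [Fintype P] (q : P → ℝ),
      (∀ ω, 0 ≤ q ω) → (∑ ω, q ω) = 1 →
      ∀ bo : P → Fin n → Bid k,
        (∀ ω, 0 < q ω → ∀ j, j ≠ i →
          bo ω j ∈ S ∧ ∃ t : T j, NoOverbid (val j t) (bo ω j)) →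
        ∃ c ∈ S, NoOverbid (val i (θ i)) c ∧
          lam * val i (θ i) (xopt θ i)
              - mu * ∑ ω, q ω * betaSum k (othersBids (bo ω) i) (xopt θ i)
            ≤ ∑ ω, q ω * uUnif X (val i (θ i)) i (Function.update (bo ω) i c))
    -- the mixed strategies: finitely supported distributions over bid vectors in `S`
    (O : Fin n → Type) [∀ i, Fintype (O i)]
    (wt : ∀ i, T i → O i → ℝ)
    (hwt0 : ∀ i t ω, 0 ≤ wt i t ω) (hwt1 : ∀ i t, ∑ ω, wt i t ω = 1)
    (B : ∀ i, T i → O i → Bid k)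
    (hBS : ∀ i t ω, 0 < wt i t ω → B i t ω ∈ S)
    -- every bid vector in the support of every equilibrium strategy does not overbid
    (hBno : ∀ i t ω, 0 < wt i t ω → NoOverbid (val i t) (B i t ω))
    -- `B` is a (mixed) Bayes-Nash equilibrium
    (hBNE : ∀ (i : Fin n) (ti : T i), ∀ c ∈ S,
      (∑ θ : (∀ j, T j), ∑ ω : (∀ j, O j),
        ((∏ j, pr j (θ j)) * ∏ j, wt j (Function.update θ i ti j) (ω j)) *
          uUnif X (val i ti) i
            (Function.update (fun j => B j (Function.update θ i ti j) (ω j)) i c))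
      ≤ ∑ θ : (∀ j, T j), ∑ ω : (∀ j, O j),
        ((∏ j, pr j (θ j)) * ∏ j, wt j (Function.update θ i ti j) (ω j)) *
          uUnif X (val i ti) i (fun j => B j (Function.update θ i ti j) (ω j))) :
    (∑ θ : (∀ j, T j), (∏ j, pr j (θ j)) * SW (fun i => val i (θ i)) (xopt θ))
      ≤ ((mu + 1) / lam) *
        ∑ θ : (∀ j, T j), ∑ ω : (∀ j, O j),
          ((∏ j, pr j (θ j)) * ∏ j, wt j (θ j) (ω j)) *
            SW (fun i => val i (θ i)) (X (fun j => B j (θ j) (ω j))) :=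
  stmt7_general n k lam mu hlam hmu T pr hpr0 hpr1 val hval S hS X hX xopt hxoptk hT O wt hwt0 hwt1
    B hBS hBno hBNE
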